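/- (Optimality on the line.) Let ε ≥ 0, 0 ≤ δ ≤ 1, n ∈ ℕ, and let m be a distribution on V. For every (ε,δ)-DP mechanism M' on the n-line with boundary condition M'(0) = m, one has M'(d) ⪯ T_{ε,δ}^d(m) for every 0 ≤ d ≤ n. -/

import Mathlib

open Finset

/-!
`T_{ε,δ} P` dominates every distribution that is `(ε,δ)`-close to `P`: applying the
closeness inequalities to the prefix `S = {1,…,k}` and to its complement bounds the `k`-th
prefix sum of any close `Q` by `s'_k`. Since `s'_k` is monotone in `s_k`, `T_{ε,δ}` is monotone
for `⪯`, and induction along the line gives `M'(d) ⪯ T_{ε,δ}^d(m)`.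
-/

/-- Prefix sum `s_k = p_1 + ⋯ + p_k` (0-indexed internally: sum of entries with index `< k`). -/
noncomputable def prefixSum (q : ℕ) (p : Fin q → ℝ) (k : ℕ) : ℝ :=
  ∑ i ∈ Finset.univ.filter (fun i : Fin q => (i : ℕ) < k), p i

/-- `p` is a probability distribution on `V = {1, …, q}`. -/
def IsDist (q : ℕ) (p : Fin q → ℝ) : Prop :=
  (∀ k, 0 ≤ p k) ∧ ∑ k, p k = 1

/-- The modified prefix sums `s'_k` defining the operator `T_{ε,δ}`:
`s'_0 = 0` and `s'_k = min {1, min {e^ε s_k, 1 - e^{-ε} (1 - s_k)} + δ}` for `k ≥ 1`. -/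
noncomputable def sPrime (ε δ : ℝ) (q : ℕ) (p : Fin q → ℝ) (k : ℕ) : ℝ :=
  if k = 0 then 0
  else min 1 (min (Real.exp ε * prefixSum q p k)
      (1 - Real.exp (-ε) * (1 - prefixSum q p k)) + δ)

/-- The operator `T_{ε,δ}`: `(T_{ε,δ} p)_k = s'_k - s'_{k-1}`. -/
noncomputable def Tmap (ε δ : ℝ) (q : ℕ) (p : Fin q → ℝ) : Fin q → ℝ :=
  fun k => sPrime ε δ q p ((k : ℕ) + 1) - sPrime ε δ q p (k : ℕ)

/-- `P` and `Q` are `(ε,δ)`-close: for every `S ⊆ V`,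
`P(S) ≤ e^ε Q(S) + δ` and `Q(S) ≤ e^ε P(S) + δ`. -/
def Close (ε δ : ℝ) (q : ℕ) (P Q : Fin q → ℝ) : Prop :=
  ∀ S : Finset (Fin q),
    (∑ k ∈ S, P k) ≤ Real.exp ε * (∑ k ∈ S, Q k) + δ ∧
    (∑ k ∈ S, Q k) ≤ Real.exp ε * (∑ k ∈ S, P k) + δ

/-- Dominance ordering: `x ⪯ y` iff every prefix sum of `x` is at most that of `y`. -/
def Dom (q : ℕ) (x y : Fin q → ℝ) : Prop :=
  ∀ k : ℕ, k ≤ q → prefixSum q x k ≤ prefixSum q y k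

variable {ε δ : ℝ} {q : ℕ}

lemma Dom.trans {x y z : Fin q → ℝ} (hxy : Dom q x y) (hyz : Dom q y z) : Dom q x z :=
  fun k hk => (hxy k hk).trans (hyz k hk)

lemma prefixSum_zero (p : Fin q → ℝ) : prefixSum q p 0 = 0 := by
  simp [prefixSum]

lemma prefixSum_succ (p : Fin q → ℝ) {k : ℕ} (hk : k < q) :
    prefixSum q p (k + 1) = prefixSum q p k + p ⟨k, hk⟩ := by
  have hfilter : univ.filter (fun i : Fin q => (i : ℕ) < k + 1) =
      insert ⟨k, hk⟩ (univ.filter (fun i : Fin q => (i : ℕ) < k)) := by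
    ext i
    simp only [mem_filter, mem_univ, true_and, mem_insert, Fin.ext_iff]
    omega
  rw [prefixSum, hfilter, sum_insert (by simp), add_comm]
  rfl

lemma prefixSum_le_one {p : Fin q → ℝ} (hp : IsDist q p) (k : ℕ) : prefixSum q p k ≤ 1 :=
  hp.2 ▸ sum_le_sum_of_subset_of_nonneg (subset_univ _) fun i _ _ => hp.1 i

lemma prefixSum_Tmap (p : Fin q → ℝ) {k : ℕ} (hk : k ≤ q) :
    prefixSum q (Tmap ε δ q p) k = sPrime ε δ q p k := by
  induction k with
  | zero => simp [prefixSum_zero, sPrime]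
  | succ k ih =>
    rw [prefixSum_succ _ hk, ih (by omega)]
    simp [Tmap]

lemma sPrime_mono {x y : Fin q → ℝ} {k : ℕ} (h : prefixSum q x k ≤ prefixSum q y k) :
    sPrime ε δ q x k ≤ sPrime ε δ q y k := by
  unfold sPrime
  split_ifs
  · rfl
  · gcongr

lemma Tmap_mono {x y : Fin q → ℝ} (h : Dom q x y) : Dom q (Tmap ε δ q x) (Tmap ε δ q y) := by
  intro k hk
  rw [prefixSum_Tmap x hk, prefixSum_Tmap y hk]
  exact sPrime_mono (h k hk)

lemma Close.sum_le {P Q : Fin q → ℝ} (hε : 0 ≤ ε) (hδ : 0 ≤ δ) (hC : Close ε δ q P Q)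
    (hP : ∑ i, P i = 1) (hQ : ∑ i, Q i = 1) (S : Finset (Fin q)) :
    ∑ i ∈ S, Q i ≤
      min (Real.exp ε * ∑ i ∈ S, P i) (1 - Real.exp (-ε) * (1 - ∑ i ∈ S, P i)) + δ := by
  have hPc : ∑ i ∈ Sᶜ, P i = 1 - ∑ i ∈ S, P i := by
    rw [← hP, ← sum_add_sum_compl S P]; ring
  have hQc : ∑ i ∈ Sᶜ, Q i = 1 - ∑ i ∈ S, Q i := by
    rw [← hQ, ← sum_add_sum_compl S Q]; ring
  have hcompl := (hC Sᶜ).1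
  rw [hPc, hQc] at hcompl
  -- multiply the complement inequality by `e^{-ε} ≤ 1`
  have hscaled := mul_le_mul_of_nonneg_left hcompl (Real.exp_nonneg (-ε))
  rw [mul_add, ← mul_assoc, ← Real.exp_add, neg_add_cancel, Real.exp_zero, one_mul] at hscaled
  have hle_one : Real.exp (-ε) ≤ 1 := Real.exp_le_one_iff.mpr (by linarith)
  have hδ' : Real.exp (-ε) * δ ≤ δ := mul_le_of_le_one_left hδ hle_one
  have hcompl_bound : ∑ i ∈ S, Q i ≤ 1 - Real.exp (-ε) * (1 - ∑ i ∈ S, P i) + δ := by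
    linarith
  rw [← min_add_add_right]
  exact le_min (hC S).2 hcompl_bound

lemma dom_Tmap_of_close {P Q : Fin q → ℝ} (hε : 0 ≤ ε) (hδ : 0 ≤ δ) (hP : IsDist q P)
    (hQ : IsDist q Q) (hC : Close ε δ q P Q) : Dom q Q (Tmap ε δ q P) := by
  intro k hk
  rw [prefixSum_Tmap P hk, sPrime]
  split_ifs with hk0
  · rw [hk0, prefixSum_zero]
  · exact le_min (prefixSum_le_one hQ k) (hC.sum_le hε hδ hP.2 hQ.2 _)

theorem line_optimality_general (q : ℕ) (ε δ : ℝ) (hε : 0 ≤ ε) (hδ0 : 0 ≤ δ)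
    (n : ℕ) (m : Fin q → ℝ)
    (M' : ℕ → Fin q → ℝ)
    (hM'dist : ∀ d : ℕ, d ≤ n → IsDist q (M' d))
    (hM'dp : ∀ d : ℕ, d + 1 ≤ n → Close ε δ q (M' d) (M' (d + 1)))
    (hM'0 : M' 0 = m) :
    ∀ d : ℕ, d ≤ n → Dom q (M' d) ((Tmap ε δ q)^[d] m) := by
  intro d
  induction d with
  | zero => intro _ k _; rw [hM'0]; rfl
  | succ d ih =>
    intro hdn
    have hd : d ≤ n := by omega
    rw [Function.iterate_succ_apply']
    exact (dom_Tmap_of_close hε hδ0 (hM'dist d hd) (hM'dist _ hdn) (hM'dp d hdn)).trans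
      (Tmap_mono (ih hd))

/-- optimality on the line: for every `(ε,δ)`-DP mechanism `M'` on the
`n`-line with boundary condition `M'(0) = m`, one has `M'(d) ⪯ T_{ε,δ}^d(m)` for all
`0 ≤ d ≤ n`. -/
theorem line_optimality (q : ℕ) (hq : 1 ≤ q) (ε δ : ℝ) (hε : 0 ≤ ε) (hδ0 : 0 ≤ δ)
    (hδ1 : δ ≤ 1) (n : ℕ) (m : Fin q → ℝ) (hm : IsDist q m)
    (M' : ℕ → Fin q → ℝ)
    (hM'dist : ∀ d : ℕ, d ≤ n → IsDist q (M' d))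
    (hM'dp : ∀ d : ℕ, d + 1 ≤ n → Close ε δ q (M' d) (M' (d + 1)))
    (hM'0 : M' 0 = m) :
    ∀ d : ℕ, d ≤ n → Dom q (M' d) ((Tmap ε δ q)^[d] m) :=
  line_optimality_general q ε δ hε hδ0 n m M' hM'dist hM'dp hM'0
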